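/- Let m, n ≥ 2 and consider the matching sequence on Δᵗ₂(K_m □ P_n). If σ ∈ 𝒞₁ and σ^c = {(0,0), (0,j)} for some 1 ≤ j ≤ n−1, then σ ∉ 𝒞_j and σ ∖ {(0,j−1)} ∉ 𝒞_j; in particular, σ ∉ 𝒞_n and σ ∖ {(0,j−1)} ∉ 𝒞_n. -/
import Mathlib


/-- Adjacency in the Cartesian product `K_m □ P_n`, on the vertex set
`{0,…,m-1} × {0,…,n-1} ⊆ ℕ × ℕ`: distinct `(i₁,j₁)`, `(i₂,j₂)` are adjacent iff
(`i₁ = i₂` and `|j₁ - j₂| = 1`) or (`j₁ = j₂` and `i₁ ≠ i₂`). -/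
def adjKmPn (m n : ℕ) (u v : ℕ × ℕ) : Prop :=
  u.1 < m ∧ u.2 < n ∧ v.1 < m ∧ v.2 < n ∧ u ≠ v ∧
    ((u.1 = v.1 ∧ (u.2 + 1 = v.2 ∨ v.2 + 1 = u.2)) ∨ (u.2 = v.2 ∧ u.1 ≠ v.1))

/-- The total 2-cut complex `Δᵗ₂(K_m □ P_n)`: faces are the subsets
`σ ⊆ {0,…,m-1} × {0,…,n-1}` whose complement contains a disconnected 2-set,
i.e. two distinct nonadjacent vertices. -/
def facesKmPn (m n : ℕ) : Set (Finset (ℕ × ℕ)) :=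
  {σ | σ ⊆ Finset.range m ×ˢ Finset.range n ∧
    ∃ u ∈ (Finset.range m ×ˢ Finset.range n) \ σ,
      ∃ v ∈ (Finset.range m ×ˢ Finset.range n) \ σ, u ≠ v ∧ ¬ adjKmPn m n u v}

/-- The matching sequence `𝒞₀, 𝒞₁, …` on `Δᵗ₂(K_m □ P_n)`, using the vertices
`(0,0), (0,1), …`: `𝒞₀` is the set of all faces, and `𝒞_{j+1}` consists of those
`σ ∈ 𝒞_j` lying in no pair of the matching
`M_j = { {σ∖{(0,j)}, σ∪{(0,j)}} : both σ∖{(0,j)} ∈ 𝒞_j and σ∪{(0,j)} ∈ 𝒞_j }`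
(a face `σ` lies in such a pair iff both `σ∖{(0,j)} ∈ 𝒞_j` and `σ∪{(0,j)} ∈ 𝒞_j`). -/
def matchSeqKmPn (m n : ℕ) : ℕ → Set (Finset (ℕ × ℕ))
  | 0 => facesKmPn m n
  | (j + 1) => {σ ∈ matchSeqKmPn m n j |
      ¬(σ.erase (0, j) ∈ matchSeqKmPn m n j ∧ insert (0, j) σ ∈ matchSeqKmPn m n j)}

lemma auxB_mono (m n : ℕ) {j k : ℕ} (h : j ≤ k) :
    matchSeqKmPn m n k ⊆ matchSeqKmPn m n j := by
  induction k with
  | zero =>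
    have : j = 0 := Nat.le_zero.mp h
    subst this; exact subset_rfl
  | succ k ih =>
    rcases Nat.lt_or_ge j (k+1) with h' | h'
    · exact fun σ hσ => ih (by omega) hσ.1
    · have : j = k + 1 := by omega
      subst this; exact subset_rfl

lemma auxB_notadj (m n a b : ℕ) (h : a + 2 ≤ b) : ¬ adjKmPn m n (0,a) (0,b) := by
  rintro ⟨-,-,-,-,-,h'⟩
  rcases h' with ⟨-, h'|h'⟩ | ⟨h', -⟩ <;> simp_all <;> omega

lemma auxB_adj (m n a : ℕ) (hm : 0 < m) (h : a + 1 < n) : adjKmPn m n (0,a) (0,a+1) :=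
  ⟨hm, by omega, hm, h, by simp, Or.inl ⟨rfl, Or.inl rfl⟩⟩

lemma auxB_adj' (m n a : ℕ) (hm : 0 < m) (h : a + 1 < n) : adjKmPn m n (0,a+1) (0,a) :=
  ⟨hm, h, hm, by omega, by simp, Or.inl ⟨rfl, Or.inr rfl⟩⟩

lemma auxB_face (m n : ℕ) (S : Finset (ℕ×ℕ)) (a b : ℕ)
    (ha : (0,a) ∈ S) (hb : (0,b) ∈ S) (hm : 0 < m) (hbn : b < n) (hab : a+2 ≤ b) :
    (Finset.range m ×ˢ Finset.range n) \ S ∈ facesKmPn m n := by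
  refine ⟨Finset.sdiff_subset, (0,a), ?_, (0,b), ?_, ?_, auxB_notadj m n a b hab⟩
  · simp only [Finset.mem_sdiff, Finset.mem_product, Finset.mem_range]
    exact ⟨⟨hm, by omega⟩, fun h => absurd ha h.2⟩
  · simp only [Finset.mem_sdiff, Finset.mem_product, Finset.mem_range]
    exact ⟨⟨hm, hbn⟩, fun h => absurd hb h.2⟩
  · simp; omega

lemma auxB_notface (m n : ℕ) (σ : Finset (ℕ×ℕ)) (a : ℕ) (hm : 0 < m) (h : a+1 < n)
    (hc : (Finset.range m ×ˢ Finset.range n) \ σ = {(0,a),(0,a+1)}) :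
    σ ∉ facesKmPn m n := by
  rintro ⟨-, u, hu, v, hv, huv, hnadj⟩
  rw [hc] at hu hv
  simp only [Finset.mem_insert, Finset.mem_singleton] at hu hv
  rcases hu with rfl | rfl <;> rcases hv with rfl | rfl
  · exact huv rfl
  · exact hnadj (auxB_adj m n a hm h)
  · exact hnadj (auxB_adj' m n a hm h)
  · exact huv rfl

lemma auxB_notC1 (m n : ℕ) (ρ : Finset (ℕ×ℕ)) (h00 : (0,0) ∉ ρ)
    (h0 : ρ ∈ facesKmPn m n) (h1 : insert ((0:ℕ),(0:ℕ)) ρ ∈ facesKmPn m n) :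
    ρ ∉ matchSeqKmPn m n 1 := by
  rintro ⟨-, hmatch⟩
  exact hmatch ⟨by rwa [Finset.erase_eq_self.mpr h00], h1⟩

lemma auxB_survive (m n : ℕ) (ρ : Finset (ℕ×ℕ)) (k : ℕ)
    (hk : ρ ∈ matchSeqKmPn m n k) (hne : ρ.erase (0,k) ∉ matchSeqKmPn m n k) :
    ρ ∈ matchSeqKmPn m n (k+1) :=
  ⟨hk, fun h => hne h.1⟩

lemma auxB_remove (m n : ℕ) (ρ : Finset (ℕ×ℕ)) (k : ℕ)
    (h1 : ρ.erase (0,k) ∈ matchSeqKmPn m n k) (h2 : insert ((0:ℕ),k) ρ ∈ matchSeqKmPn m n k) :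
    ρ ∉ matchSeqKmPn m n (k+1) :=
  fun h => h.2 ⟨h1, h2⟩

lemma auxB_erase (G C : Finset (ℕ×ℕ)) (v : ℕ×ℕ) : (G \ C).erase v = G \ insert v C := by
  ext x
  simp only [Finset.mem_erase, Finset.mem_sdiff, Finset.mem_insert]
  tauto

lemma auxB_insert (G C : Finset (ℕ×ℕ)) (v : ℕ×ℕ) (hv : v ∈ G) :
    insert v (G \ C) = G \ C.erase v := by
  ext x
  simp only [Finset.mem_insert, Finset.mem_sdiff, Finset.mem_erase]
  constructor
  · rintro (rfl | ⟨h1, h2⟩)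
    · exact ⟨hv, fun h => h.1 rfl⟩
    · exact ⟨h1, fun h => h2 h.2⟩
  · rintro ⟨h1, h2⟩
    by_cases hx : x = v
    · exact Or.inl hx
    · exact Or.inr ⟨h1, fun hC => h2 ⟨hx, hC⟩⟩

/-- Proposition 3.13(i): let `m, n ≥ 2`.  If `σ ∈ 𝒞₁` and
`σᶜ = {(0,0), (0,j)}` for some `1 ≤ j ≤ n-1`, then `σ ∉ 𝒞_j` and
`σ ∖ {(0,j-1)} ∉ 𝒞_j`; in particular `σ ∉ 𝒞_n` and `σ ∖ {(0,j-1)} ∉ 𝒞_n`. -/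
theorem stmt15 (m n : ℕ) (hm : 2 ≤ m) (hn : 2 ≤ n)
    (σ : Finset (ℕ × ℕ)) (hσ : σ ∈ matchSeqKmPn m n 1)
    (j : ℕ) (hj1 : 1 ≤ j) (hj2 : j ≤ n - 1)
    (hc : (Finset.range m ×ˢ Finset.range n) \ σ = {(0, 0), (0, j)}) :
    (σ ∉ matchSeqKmPn m n j ∧ σ.erase (0, j - 1) ∉ matchSeqKmPn m n j) ∧
      (σ ∉ matchSeqKmPn m n n ∧ σ.erase (0, j - 1) ∉ matchSeqKmPn m n n) := by
  set G := Finset.range m ×ˢ Finset.range n with hG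
  have h0m : 0 < m := by omega
  have hjn : j < n := by omega
  have hσ0 : σ ∈ facesKmPn m n := hσ.1
  have hσG : σ ⊆ G := hσ0.1
  -- dispose of the case j = 1
  rcases eq_or_lt_of_le hj1 with hj | hj2lt
  · exact absurd hσ0 (auxB_notface m n σ 0 h0m (by omega) (by rw [← hj] at hc; exact hc))
  have hj2le : 2 ≤ j := hj2lt
  -- grid membership of column-0 vertices
  have hmemG : ∀ t : ℕ, t < n → ((0:ℕ), t) ∈ G := by
    intro t ht
    simp only [hG, Finset.mem_product, Finset.mem_range]
    exact ⟨h0m, ht⟩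
  have hne0 : ∀ t : ℕ, 1 ≤ t → ((0:ℕ),(0:ℕ)) ≠ ((0:ℕ), t) := by
    intro t ht h
    simp only [Prod.mk.injEq] at h
    omega
  -- σ as an explicit complement
  have hσeq : σ = G \ {(0,0),(0,j)} := by
    rw [← hc]
    exact (sdiff_sdiff_eq_self hσG).symm
  -- τ = σ.erase (0, j-1) as an explicit complement
  have hτeq : σ.erase (0, j-1) = G \ {(0,0),(0,j-1),(0,j)} := by
    rw [hσeq, auxB_erase, Finset.insert_comm]
  set τ := σ.erase (0, j-1) with hτ
  -- key induction: σ and τ survive through step j-1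
  have key : ∀ k, 1 ≤ k → k ≤ j - 1 → σ ∈ matchSeqKmPn m n k ∧ τ ∈ matchSeqKmPn m n k := by
    intro k
    induction k with
    | zero => omega
    | succ k ih =>
      intro h1 h2
      rcases Nat.eq_zero_or_pos k with rfl | hk1
      · -- base case: k + 1 = 1
        refine ⟨hσ, ?_⟩
        have hτ0 : τ ∈ facesKmPn m n := by
          rw [hτeq]
          exact auxB_face m n _ 0 j (by simp) (by simp) h0m hjn (by omega)
        refine ⟨hτ0, fun hmatch => ?_⟩
        have hins : insert ((0:ℕ),(0:ℕ)) τ = G \ {(0,j-1),(0,j)} := by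
          have hnm : ((0:ℕ),(0:ℕ)) ∉ ({(0,j-1),(0,j)} : Finset (ℕ×ℕ)) := by
            simp only [Finset.mem_insert, Finset.mem_singleton, Prod.mk.injEq, true_and]
            omega
          rw [hτeq, auxB_insert _ _ _ (hmemG 0 (by omega)), Finset.erase_insert hnm]
        have : insert ((0:ℕ),(0:ℕ)) τ ∉ facesKmPn m n := by
          rw [hins]
          apply auxB_notface m n _ (j-1) h0m (by omega)
          have hsub : ({(0,j-1),(0,j)} : Finset (ℕ×ℕ)) ⊆ G := by
            intro x hx
            simp only [Finset.mem_insert, Finset.mem_singleton] at hx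
            rcases hx with rfl | rfl
            · exact hmemG _ (by omega)
            · exact hmemG _ hjn
          rw [sdiff_sdiff_eq_self hsub]
          have hj' : j - 1 + 1 = j := by omega
          rw [hj']
        exact this hmatch.2
      · -- inductive step: 1 ≤ k ≤ j - 2
        have hkj : k ≤ j - 2 := by omega
        obtain ⟨hσk, hτk⟩ := ih (by omega) (by omega)
        constructor
        · -- σ survives step k
          apply auxB_survive m n σ k hσk
          have her : σ.erase ((0:ℕ),k) = G \ {(0,0),(0,k),(0,j)} := by
            rw [hσeq, auxB_erase, Finset.insert_comm]
          rw [her]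
          intro hC
          have hnot1 : G \ ({(0,0),(0,k),(0,j)} : Finset (ℕ×ℕ)) ∉ matchSeqKmPn m n 1 := by
            apply auxB_notC1
            · simp [hG]
            · exact auxB_face m n _ 0 j (by simp) (by simp) h0m hjn (by omega)
            · have hnm : ((0:ℕ),(0:ℕ)) ∉ ({(0,k),(0,j)} : Finset (ℕ×ℕ)) := by
                simp only [Finset.mem_insert, Finset.mem_singleton, Prod.mk.injEq, true_and]
                omega
              rw [auxB_insert _ _ _ (hmemG 0 (by omega)), Finset.erase_insert hnm]
              exact auxB_face m n _ k j (by simp) (by simp) h0m hjn (by omega)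
          exact hnot1 (auxB_mono m n hk1 hC)
        · -- τ survives step k
          apply auxB_survive m n τ k hτk
          have her : τ.erase ((0:ℕ),k) = G \ {(0,0),(0,k),(0,j-1),(0,j)} := by
            rw [hτeq, auxB_erase, Finset.insert_comm]
          rw [her]
          intro hC
          have hnot1 : G \ ({(0,0),(0,k),(0,j-1),(0,j)} : Finset (ℕ×ℕ)) ∉ matchSeqKmPn m n 1 := by
            apply auxB_notC1
            · simp [hG]
            · exact auxB_face m n _ 0 j (by simp) (by simp) h0m hjn (by omega)
            · have hnm : ((0:ℕ),(0:ℕ)) ∉ ({(0,k),(0,j-1),(0,j)} : Finset (ℕ×ℕ)) := by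
                simp only [Finset.mem_insert, Finset.mem_singleton, Prod.mk.injEq, true_and]
                omega
              rw [auxB_insert _ _ _ (hmemG 0 (by omega)), Finset.erase_insert hnm]
              exact auxB_face m n _ k j (by simp) (by simp) h0m hjn (by omega)
          exact hnot1 (auxB_mono m n hk1 hC)
  obtain ⟨hσj1, hτj1⟩ := key (j-1) (by omega) le_rfl
  have hmemσ : ((0:ℕ), j-1) ∈ σ := by
    rw [hσeq]
    simp only [Finset.mem_sdiff, Finset.mem_insert, Finset.mem_singleton, Prod.mk.injEq]
    refine ⟨hmemG _ (by omega), by omega⟩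
  have hjeq : j = (j-1) + 1 := by omega
  have hσnj : σ ∉ matchSeqKmPn m n j := by
    rw [hjeq]
    exact auxB_remove m n σ (j-1) hτj1 (by rwa [Finset.insert_eq_self.mpr hmemσ])
  have hτnj : τ ∉ matchSeqKmPn m n j := by
    rw [hjeq]
    apply auxB_remove m n τ (j-1)
    · rwa [Finset.erase_eq_self.mpr (Finset.notMem_erase _ _)]
    · rwa [hτ, Finset.insert_erase hmemσ]
  exact ⟨⟨hσnj, hτnj⟩,
    fun h => hσnj (auxB_mono m n hjn.le h),
    fun h => hτnj (auxB_mono m n hjn.le h)⟩
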